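/- arXiv:1411.6879 — 2 statements merged into one kernel-verified Lean document; each statement's English description precedes it below -/
import Mathlib

section
/- Let $a \in \R^{n\times n}$ with decreasing rearrangement $s(1)\ge\dots\ge s(n^2)$ of $(|a_{ij}|)$. Then for every $\ell \le n$, $\frac{1}{800}\cdot\frac{1}{n}\sum_{j=1}^{\ell n}s(j) \le \frac{1}{n!}\sum_{\pi\in\mathfrak{S}_n}\sum_{k=1}^{\ell}\kmax_{1\le i\le n}|a_{i\pi(i)}| \le 2\cdot\frac{1}{n}\sum_{j=1}^{\ell n}s(j)$, where $\mathfrak{S}_n$ is the symmetric group and $\kmax$ denotes the $k$-th largest value. -/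
/-!
Write `W` for the sum of the `ℓ n` largest entries `|a i j|` and `S` for the sum over `σ` of the
top-`ℓ` sums of `(|a i (σ i)|)ᵢ`. Since `n! = n (n-1)!`, it suffices that
`S ≤ (n-1)! W ≤ 200 S`.

Upper bound: the top-`m` sum of a nonnegative vector is `min_{θ ≥ 0} (m θ + ∑ᵢ (xᵢ - θ)⁺)`.
Bound every top-`ℓ` sum using the `θ` that is optimal for `W`; summing over `σ`, each cell lies on
the graph of `(n-1)!` permutations, and the total is `(n-1)! W`.

Lower bound: let `T` be the `⌈ℓ n / 100⌉` largest cells. Among the `(n-1)!` permutations through a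
cell `p ∈ T`, each other cell of `T` is hit by at most a `1/(n-1)` fraction, so by Markov's
inequality at least half of them hit `T` at most `ℓ` times, and for those the entries on `T` are
dominated by the top-`ℓ` sum. Double counting gives `(n-1)! ∑_T |a| ≤ 2 S`, and
`∑_T |a| ≥ W / 100` because the average of the `k` largest entries decreases with `k`.
-/

/-- `kmax x k` is the `k`-th largest entry (1-indexed) of the vector `x`. -/
noncomputable def kmax {n : ℕ} (x : Fin n → ℝ) (k : ℕ) : ℝ :=
  ((List.ofFn x).mergeSort (fun a b => decide (b ≤ a))).getD (k - 1) 0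

/-- `smat a k` is the `k`-th largest entry (1-indexed) of `(|a i j|)`. -/
noncomputable def smat {n N : ℕ} (a : Fin n → Fin N → ℝ) (k : ℕ) : ℝ :=
  (((Finset.univ : Finset (Fin n × Fin N)).toList.map
      (fun p => |a p.1 p.2|)).mergeSort (fun a b => decide (b ≤ a))).getD (k - 1) 0

open Finset
open scoped Nat

theorem List.sum_map_eq_sum_range_getD {α M : Type*} [AddCommMonoid M] (l : List α) (d : α)
    (g : α → M) : (l.map g).sum = ∑ k ∈ Finset.range l.length, g (l.getD k d) := by
  induction l with
  | nil => simp
  | cons a t ih => simp [Finset.sum_range_succ', ih, add_comm]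

theorem List.sum_take_eq_sum_range_getD {M : Type*} [AddCommMonoid M] (l : List M) (m : ℕ) :
    (l.take m).sum = ∑ k ∈ Finset.range m, l.getD k 0 := by
  induction m with
  | zero => simp
  | succ m ih =>
    rw [List.take_add_one, List.sum_append, ih, Finset.sum_range_succ, List.getD_eq_getElem?_getD]
    cases l[m]? <;> simp

theorem sum_range_le_sum_range_of_eq_zero {M : Type*} [AddCommMonoid M] [PartialOrder M]
    [IsOrderedAddMonoid M] {h : ℕ → M} {N : ℕ} (h0 : ∀ k, 0 ≤ h k)
    (hz : ∀ k, N ≤ k → h k = 0) (K : ℕ) : ∑ k ∈ range K, h k ≤ ∑ k ∈ range N, h k :=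
  calc ∑ k ∈ range K, h k ≤ ∑ k ∈ range (max K N), h k :=
        sum_le_sum_of_subset_of_nonneg (range_subset_range.2 (le_max_left _ _))
          fun k _ _ => h0 k
    _ = ∑ k ∈ range N, h k :=
        (sum_subset (range_subset_range.2 (le_max_right _ _))
          fun k _ hk => hz k (by simpa using hk)).symm

noncomputable def sortDesc (l : List ℝ) : List ℝ := l.mergeSort (fun a b => decide (b ≤ a))

section SortDesc

variable {l l' : List ℝ}

theorem sortDesc_perm (l : List ℝ) : (sortDesc l).Perm l := List.mergeSort_perm _ _

theorem pairwise_sortDesc (l : List ℝ) : (sortDesc l).Pairwise (· ≥ ·) :=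
  List.pairwise_mergeSort' (· ≥ ·) l

theorem sortDesc_eq_of_perm (h : l.Perm l') : sortDesc l = sortDesc l' :=
  ((sortDesc_perm l).trans (h.trans (sortDesc_perm l').symm)).eq_of_pairwise'
    (pairwise_sortDesc l) (pairwise_sortDesc l')

theorem getD_sortDesc_nonneg (hl : ∀ y ∈ l, 0 ≤ y) (k : ℕ) : 0 ≤ (sortDesc l).getD k 0 := by
  rcases lt_or_ge k (sortDesc l).length with hk | hk
  · rw [List.getD_eq_getElem _ _ hk]
    exact hl _ ((sortDesc_perm l).subset (List.getElem_mem hk))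
  · rw [List.getD_eq_default _ _ hk]

theorem antitone_getD_sortDesc (hl : ∀ y ∈ l, 0 ≤ y) :
    Antitone fun k => (sortDesc l).getD k 0 := by
  intro k k' hkk'
  rcases lt_or_ge k' (sortDesc l).length with hk' | hk'
  · simp only [List.getD_eq_getElem _ _ hk', List.getD_eq_getElem _ _ (hkk'.trans_lt hk')]
    rcases hkk'.eq_or_lt with rfl | hlt
    · rfl
    · exact List.pairwise_iff_getElem.mp (pairwise_sortDesc l) k k' _ hk' hlt
  · simp only [List.getD_eq_default _ _ hk']
    exact getD_sortDesc_nonneg hl k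

end SortDesc

-- 0-indexed, unlike `kmax`; past the end (`k ≥ card ι`) the value is `0`.
noncomputable def kthLargest {ι : Type*} [Fintype ι] (x : ι → ℝ) (k : ℕ) : ℝ :=
  (sortDesc (univ.toList.map x)).getD k 0

noncomputable def topSum {ι : Type*} [Fintype ι] (x : ι → ℝ) (m : ℕ) : ℝ :=
  ∑ k ∈ range m, kthLargest x k

section TopSum

variable {ι : Type*} [Fintype ι] (x : ι → ℝ)

theorem kthLargest_nonneg (hx : ∀ i, 0 ≤ x i) (k : ℕ) : 0 ≤ kthLargest x k :=
  getD_sortDesc_nonneg (by simpa using fun i => hx i) k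

theorem antitone_kthLargest (hx : ∀ i, 0 ≤ x i) : Antitone (kthLargest x) :=
  antitone_getD_sortDesc (by simpa using fun i => hx i)

theorem kthLargest_of_card_le {k : ℕ} (hk : Fintype.card ι ≤ k) : kthLargest x k = 0 :=
  List.getD_eq_default _ _ (by simpa [sortDesc] using hk)

theorem sum_comp_eq_sum_kthLargest (g : ℝ → ℝ) :
    ∑ i, g (x i) = ∑ k ∈ range (Fintype.card ι), g (kthLargest x k) := by
  rw [← sum_map_toList, show univ.toList.map (fun i => g (x i)) = (univ.toList.map x).map g by simp,
    ← ((sortDesc_perm _).map g).sum_eq,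
    List.sum_map_eq_sum_range_getD _ 0]
  simp [sortDesc, kthLargest]

theorem topSum_nonneg (hx : ∀ i, 0 ≤ x i) (m : ℕ) : 0 ≤ topSum x m :=
  sum_nonneg fun k _ => kthLargest_nonneg x hx k

theorem topSum_le_mul_add_sum_posPart {θ : ℝ} (hθ : 0 ≤ θ) (m : ℕ) :
    topSum x m ≤ m * θ + ∑ i, (x i - θ)⁺ := by
  have hbeyond : ∀ k, Fintype.card ι ≤ k → (kthLargest x k - θ)⁺ = 0 := fun k hk => by
    rw [kthLargest_of_card_le x hk, posPart_eq_zero]; linarith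
  calc topSum x m ≤ ∑ k ∈ range m, (θ + (kthLargest x k - θ)⁺) :=
        sum_le_sum fun k _ => by linarith [le_posPart (kthLargest x k - θ)]
    _ = m * θ + ∑ k ∈ range m, (kthLargest x k - θ)⁺ := by
        rw [sum_add_distrib, sum_const, card_range, nsmul_eq_mul]
    _ ≤ m * θ + ∑ i, (x i - θ)⁺ := by
        rw [sum_comp_eq_sum_kthLargest x fun y => (y - θ)⁺]
        linarith [sum_range_le_sum_range_of_eq_zero (fun k => posPart_nonneg _) hbeyond m]

-- `θ` is the `m`-th largest value (the largest one when `m = 0`, by truncated subtraction).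
theorem exists_mul_add_sum_posPart_le_topSum (hx : ∀ i, 0 ≤ x i) (m : ℕ) :
    ∃ θ, 0 ≤ θ ∧ m * θ + ∑ i, (x i - θ)⁺ ≤ topSum x m := by
  set θ := kthLargest x (m - 1)
  refine ⟨θ, kthLargest_nonneg x hx _, ?_⟩
  have hbelow : ∀ k, m ≤ k → (kthLargest x k - θ)⁺ = 0 := fun k hk => by
    rw [posPart_eq_zero, sub_nonpos]; exact antitone_kthLargest x hx (by omega)
  have habove : ∀ k ∈ range m, (kthLargest x k - θ)⁺ = kthLargest x k - θ := fun k hk => by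
    rw [posPart_eq_self, sub_nonneg]
    exact antitone_kthLargest x hx (by simp at hk; omega)
  have := sum_range_le_sum_range_of_eq_zero (fun k => posPart_nonneg _) hbelow
    (Fintype.card ι)
  rw [← sum_comp_eq_sum_kthLargest x fun y => (y - θ)⁺, sum_congr rfl habove,
    sum_sub_distrib, sum_const, card_range, nsmul_eq_mul] at this
  unfold topSum
  linarith

theorem sum_le_topSum (hx : ∀ i, 0 ≤ x i) {s : Finset ι} {m : ℕ} (hs : #s ≤ m) :
    ∑ i ∈ s, x i ≤ topSum x m := by
  obtain ⟨θ, hθ, hW⟩ := exists_mul_add_sum_posPart_le_topSum x hx m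
  have hsm : (#s : ℝ) * θ ≤ m * θ := by gcongr
  calc ∑ i ∈ s, x i ≤ ∑ i ∈ s, (θ + (x i - θ)⁺) :=
        sum_le_sum fun i _ => by linarith [le_posPart (x i - θ)]
    _ = #s * θ + ∑ i ∈ s, (x i - θ)⁺ := by rw [sum_add_distrib, sum_const, nsmul_eq_mul]
    _ ≤ m * θ + ∑ i, (x i - θ)⁺ :=
        add_le_add hsm
          (sum_le_sum_of_subset_of_nonneg (subset_univ s) fun i _ _ => posPart_nonneg _)
    _ ≤ topSum x m := hW

theorem exists_sum_eq_topSum (m : ℕ) : ∃ s : Finset ι, #s ≤ m ∧ ∑ i ∈ s, x i = topSum x m := by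
  classical
  set P := univ.toList.mergeSort (fun i j => decide (x j ≤ x i))
  have hP : P.map x = sortDesc (univ.toList.map x) := List.map_mergeSort fun _ _ _ _ => rfl
  have hnodup : (P.take m).Nodup :=
    ((List.mergeSort_perm _ _).nodup_iff.2 (nodup_toList _)).sublist (List.take_sublist _ _)
  refine ⟨(P.take m).toFinset, (List.toFinset_card_le _).trans (List.length_take_le _ _), ?_⟩
  rw [List.sum_toFinset _ hnodup, List.map_take, hP, List.sum_take_eq_sum_range_getD]
  rfl

theorem mul_topSum_le_mul_topSum (hx : ∀ i, 0 ≤ x i) {k m : ℕ} (hkm : k ≤ m) :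
    k * topSum x m ≤ m * topSum x k := by
  set e : ℕ → ℝ := fun j => if j < k then 1 else 0
  have he : Antitone e := fun a b hab => by
    simp only [e]; split_ifs <;> norm_num; omega
  have hcheb := (((antitone_kthLargest x hx).monovary he).monovaryOn
    (range m : Set ℕ)).sum_mul_sum_le_card_mul_sum
  have hfilter : (range m).filter (· < k) = range k := by
    ext j; simp only [mem_filter, mem_range]; omega
  simp only [e, mul_ite, mul_one, mul_zero, sum_ite, sum_const_zero, add_zero, hfilter,
    sum_const, card_range, nsmul_eq_mul] at hcheb
  unfold topSum
  linarith

end TopSum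

namespace Equiv.Perm

variable {α : Type*} [Fintype α] [DecidableEq α]

theorem card_apply_eq_congr (i j j' : α) :
    #{σ : Perm α | σ i = j} = #{σ : Perm α | σ i = j'} :=
  card_equiv (Equiv.mulLeft (swap j j')) fun σ => by simp [swap_apply_eq_iff]

theorem card_apply_eq (i j : α) : #{σ : Perm α | σ i = j} = (Fintype.card α - 1)! := by
  have : Nonempty α := ⟨i⟩
  have hn : Fintype.card α ≠ 0 := Fintype.card_ne_zero
  have h := card_eq_sum_card_fiberwise (f := fun σ : Perm α => σ i) (s := univ) (t := univ)
    fun _ _ => mem_univ _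
  simp only [card_apply_eq_congr i _ j, sum_const, card_univ, smul_eq_mul,
    Fintype.card_perm] at h
  apply Nat.eq_of_mul_eq_mul_left (Nat.pos_of_ne_zero hn)
  rw [Nat.mul_factorial_pred hn, h]

theorem card_apply_eq_and_apply_eq {i i' j j' : α} (hi : i ≠ i') (hj : j ≠ j') :
    #{σ : Perm α | σ i = j ∧ σ i' = j'} = (Fintype.card α - 2)! := by
  have hn : 1 < Fintype.card α := Fintype.one_lt_card_iff.2 ⟨i, i', hi⟩
  have hcongr : ∀ j'' ≠ j, #{σ : Perm α | σ i = j ∧ σ i' = j''}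
      = #{σ : Perm α | σ i = j ∧ σ i' = j'} := fun j'' hj'' =>
    card_equiv (Equiv.mulLeft (swap j'' j')) fun σ => by
      simp [swap_apply_eq_iff, swap_apply_of_ne_of_ne hj''.symm hj]
  have hdiag : #{σ : Perm α | σ i = j ∧ σ i' = j} = 0 :=
    card_eq_zero.2 <| filter_false_of_mem fun σ _ h => hi (σ.injective (h.1.trans h.2.symm))
  have h := card_eq_sum_card_fiberwise (f := fun σ : Perm α => σ i')
    (s := {σ : Perm α | σ i = j}) (t := univ) fun _ _ => mem_univ _
  simp only [filter_filter, card_apply_eq] at h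
  rw [← add_sum_erase _ _ (mem_univ j), hdiag, zero_add,
    sum_congr rfl fun j'' hj'' => hcongr j'' (ne_of_mem_erase hj''), sum_const,
    card_erase_of_mem (mem_univ j), card_univ, smul_eq_mul] at h
  apply Nat.eq_of_mul_eq_mul_left (show 0 < Fintype.card α - 1 by omega)
  rw [← h, show Fintype.card α - 2 = Fintype.card α - 1 - 1 by omega,
    Nat.mul_factorial_pred (by omega)]

theorem mul_card_apply_eq_and_apply_eq_le {i i' j j' : α} (h : (i, j) ≠ (i', j')) :
    (Fintype.card α - 1) * #{σ : Perm α | σ i = j ∧ σ i' = j'} ≤ (Fintype.card α - 1)! := by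
  by_cases hi : i = i'
  · subst hi
    have hj : j ≠ j' := fun hj => h (by rw [hj])
    have : #{σ : Perm α | σ i = j ∧ σ i = j'} = 0 :=
      card_eq_zero.2 <| filter_false_of_mem fun σ _ h' => hj (h'.1.symm.trans h'.2)
    simp [this]
  by_cases hj : j = j'
  · subst hj
    have : #{σ : Perm α | σ i = j ∧ σ i' = j} = 0 :=
      card_eq_zero.2 <| filter_false_of_mem fun σ _ h' => hi (σ.injective (h'.1.trans h'.2.symm))
    simp [this]
  rw [card_apply_eq_and_apply_eq hi hj, show Fintype.card α - 2 = Fintype.card α - 1 - 1 by omega,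
    Nat.mul_factorial_pred (by have := Fintype.one_lt_card_iff.2 ⟨i, i', hi⟩; omega)]

end Equiv.Perm

section Hits

open Equiv

variable {α : Type*} [Fintype α] [DecidableEq α]

def hits (σ : Perm α) (T : Finset (α × α)) : Finset (α × α) := {q ∈ T | σ q.1 = q.2}

theorem mul_card_many_hits_le {T : Finset (α × α)} {p : α × α} (hp : p ∈ T) (ℓ : ℕ) :
    ℓ * (Fintype.card α - 1) * #{σ : Perm α | σ p.1 = p.2 ∧ ℓ < #(hits σ T)}
      ≤ (#T - 1) * (Fintype.card α - 1)! := by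
  set F : Finset (Perm α) := {σ | σ p.1 = p.2}
  have hothers : ∀ σ ∈ F, #(hits σ (T.erase p)) = #(hits σ T) - 1 := fun σ hσ => by
    rw [hits, filter_erase, card_erase_of_mem (mem_filter.2 ⟨hp, (mem_filter.1 hσ).2⟩)]
    rfl
  have hmarkov : ℓ * #{σ : Perm α | σ p.1 = p.2 ∧ ℓ < #(hits σ T)}
      ≤ ∑ σ ∈ F, #(hits σ (T.erase p)) := by
    rw [← filter_filter, card_eq_sum_ones, mul_sum, mul_one]
    calc ∑ σ ∈ F with ℓ < #(hits σ T), ℓ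
        ≤ ∑ σ ∈ F with ℓ < #(hits σ T), #(hits σ (T.erase p)) :=
          sum_le_sum fun σ hσ => by
            rw [mem_filter] at hσ; rw [hothers σ hσ.1]; omega
      _ ≤ ∑ σ ∈ F, #(hits σ (T.erase p)) := sum_le_sum_of_subset (filter_subset _ _)
  have hcount : ∑ σ ∈ F, #(hits σ (T.erase p))
      = ∑ q ∈ T.erase p, #{σ : Perm α | σ p.1 = p.2 ∧ σ q.1 = q.2} := by
    convert sum_card_bipartiteAbove_eq_sum_card_bipartiteBelow
      (fun (σ : Perm α) (q : α × α) => σ q.1 = q.2) using 3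
    · rfl
    · rw [bipartiteBelow, filter_filter]
  calc ℓ * (Fintype.card α - 1) * #{σ : Perm α | σ p.1 = p.2 ∧ ℓ < #(hits σ T)}
      ≤ (Fintype.card α - 1) * ∑ σ ∈ F, #(hits σ (T.erase p)) := by
        rw [mul_comm ℓ, mul_assoc]; exact Nat.mul_le_mul_left _ hmarkov
    _ ≤ ∑ _q ∈ T.erase p, (Fintype.card α - 1)! := by
        rw [hcount, mul_sum]
        exact sum_le_sum fun q hq =>
          Perm.mul_card_apply_eq_and_apply_eq_le (ne_of_mem_erase hq).symm
    _ = (#T - 1) * (Fintype.card α - 1)! := by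
        rw [sum_const, card_erase_of_mem hp, smul_eq_mul]

theorem factorial_le_two_mul_card_few_hits {T : Finset (α × α)} {p : α × α} (hp : p ∈ T)
    {ℓ : ℕ} (hℓ : 0 < ℓ) (hT : 2 * (#T - 1) ≤ ℓ * (Fintype.card α - 1)) :
    (Fintype.card α - 1)! ≤ 2 * #{σ : Perm α | σ p.1 = p.2 ∧ #(hits σ T) ≤ ℓ} := by
  have hsplit : #{σ : Perm α | σ p.1 = p.2 ∧ #(hits σ T) ≤ ℓ}
      + #{σ : Perm α | σ p.1 = p.2 ∧ ℓ < #(hits σ T)} = (Fintype.card α - 1)! := by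
    rw [← Perm.card_apply_eq p.1 p.2, ← filter_filter, ← filter_filter]
    simpa only [not_le] using card_filter_add_card_filter_not (s := {σ : Perm α | σ p.1 = p.2})
      fun σ => #(hits σ T) ≤ ℓ
  rcases Nat.eq_zero_or_pos (Fintype.card α - 1) with hn | hn
  · -- `T` has at most one cell, so no permutation hits it more than once
    have hbad : #{σ : Perm α | σ p.1 = p.2 ∧ ℓ < #(hits σ T)} = 0 :=
      card_eq_zero.2 <| filter_false_of_mem fun σ _ h => by
        have := card_le_card (filter_subset (fun q : α × α => σ q.1 = q.2) T)
        rw [hn] at hT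
        exact absurd h.2 (by unfold hits; omega)
    omega
  · have hbad := mul_card_many_hits_le hp ℓ
    have : ℓ * (Fintype.card α - 1) * (2 * #{σ : Perm α | σ p.1 = p.2 ∧ ℓ < #(hits σ T)})
        ≤ ℓ * (Fintype.card α - 1) * (Fintype.card α - 1)! :=
      calc _ = 2 * (ℓ * (Fintype.card α - 1) * #{σ : Perm α | σ p.1 = p.2 ∧ ℓ < #(hits σ T)}) :=
            by ring
        _ ≤ 2 * ((#T - 1) * (Fintype.card α - 1)!) := Nat.mul_le_mul_left 2 hbad
        _ ≤ _ := by rw [← mul_assoc]; exact Nat.mul_le_mul_right _ hT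
    have := Nat.le_of_mul_le_mul_left this (Nat.mul_pos hℓ hn)
    omega

theorem sum_hits_le_topSum {f : α × α → ℝ} (hf : ∀ q, 0 ≤ f q) {σ : Perm α}
    {T : Finset (α × α)} {ℓ : ℕ} (h : #(hits σ T) ≤ ℓ) :
    ∑ q ∈ hits σ T, f q ≤ topSum (fun i => f (i, σ i)) ℓ := by
  have hinj : Function.Injective fun i => (i, σ i) := fun _ _ h => congrArg Prod.fst h
  have himage : hits σ T = image (fun i => (i, σ i)) {i | (i, σ i) ∈ T} := by
    ext ⟨i, j⟩
    simp only [hits, mem_filter, mem_image, mem_univ, true_and, Prod.mk.injEq]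
    constructor
    · rintro ⟨hT, rfl⟩; exact ⟨i, hT, rfl, rfl⟩
    · rintro ⟨i, hT, rfl, rfl⟩; exact ⟨hT, rfl⟩
  rw [himage, card_image_of_injective _ hinj] at h
  rw [himage, sum_image hinj.injOn]
  exact sum_le_topSum _ (fun i => hf _) h

end Hits

section Bounds

open Equiv

variable {α : Type*} [Fintype α] [DecidableEq α] {f : α × α → ℝ}

theorem sum_topSum_le_factorial_mul_topSum [Nonempty α] (hf : ∀ q, 0 ≤ f q) (ℓ : ℕ) :
    ∑ σ : Perm α, topSum (fun i => f (i, σ i)) ℓ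
      ≤ (Fintype.card α - 1)! * topSum f (ℓ * Fintype.card α) := by
  obtain ⟨θ, hθ, hW⟩ := exists_mul_add_sum_posPart_le_topSum f hf (ℓ * Fintype.card α)
  have hcount : ∑ σ : Perm α, ∑ i, (f (i, σ i) - θ)⁺
      = (Fintype.card α - 1)! * ∑ q, (f q - θ)⁺ := by
    rw [sum_comm, Fintype.sum_prod_type, mul_sum]
    refine sum_congr rfl fun i _ => ?_
    rw [← sum_fiberwise univ (fun σ : Perm α => σ i), mul_sum]
    refine sum_congr rfl fun j _ => ?_
    rw [sum_congr rfl fun σ hσ => by rw [(mem_filter.1 hσ).2], sum_const,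
      Perm.card_apply_eq, nsmul_eq_mul]
  have hn : Fintype.card α ≠ 0 := Fintype.card_ne_zero
  calc ∑ σ : Perm α, topSum (fun i => f (i, σ i)) ℓ
      ≤ ∑ σ : Perm α, (ℓ * θ + ∑ i, (f (i, σ i) - θ)⁺) :=
        sum_le_sum fun σ _ => topSum_le_mul_add_sum_posPart _ hθ ℓ
    _ = (Fintype.card α)! * (ℓ * θ) + (Fintype.card α - 1)! * ∑ q, (f q - θ)⁺ := by
        rw [sum_add_distrib, hcount, sum_const, card_univ, Fintype.card_perm, nsmul_eq_mul]
    _ = (Fintype.card α - 1)! * ((ℓ * Fintype.card α : ℕ) * θ + ∑ q, (f q - θ)⁺) := by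
        rw [← Nat.mul_factorial_pred hn]; push_cast; ring
    _ ≤ (Fintype.card α - 1)! * topSum f (ℓ * Fintype.card α) := by gcongr

theorem factorial_mul_sum_le_two_mul_sum_topSum (hf : ∀ q, 0 ≤ f q) {T : Finset (α × α)}
    {ℓ : ℕ} (hℓ : 0 < ℓ) (hT : 2 * (#T - 1) ≤ ℓ * (Fintype.card α - 1)) :
    (Fintype.card α - 1)! * ∑ q ∈ T, f q ≤ 2 * ∑ σ : Perm α, topSum (fun i => f (i, σ i)) ℓ := by
  set G : Finset (Perm α) := {σ | #(hits σ T) ≤ ℓ}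
  have hswap : ∑ σ ∈ G, ∑ q ∈ hits σ T, f q
      = ∑ q ∈ T, (#{σ : Perm α | σ q.1 = q.2 ∧ #(hits σ T) ≤ ℓ} : ℝ) * f q := by
    have hmem : ∀ σ q, σ ∈ G ∧ q ∈ hits σ T
        ↔ σ ∈ ({σ | σ q.1 = q.2 ∧ #(hits σ T) ≤ ℓ} : Finset (Perm α)) ∧ q ∈ T := fun σ q => by
      rw [mem_filter, mem_filter, hits, mem_filter]; simp only [mem_univ, true_and]; tauto
    rw [sum_comm' hmem]
    simp only [sum_const, nsmul_eq_mul]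
  calc (Fintype.card α - 1)! * ∑ q ∈ T, f q
      = ∑ q ∈ T, ((Fintype.card α - 1)! : ℝ) * f q := mul_sum _ _ _
    _ ≤ ∑ q ∈ T, 2 * (#{σ : Perm α | σ q.1 = q.2 ∧ #(hits σ T) ≤ ℓ} : ℝ) * f q :=
        sum_le_sum fun q hq => mul_le_mul_of_nonneg_right
          (by exact_mod_cast factorial_le_two_mul_card_few_hits hq hℓ hT) (hf q)
    _ = 2 * ∑ σ ∈ G, ∑ q ∈ hits σ T, f q := by
        rw [hswap, mul_sum]; simp only [mul_assoc]
    _ ≤ 2 * ∑ σ ∈ G, topSum (fun i => f (i, σ i)) ℓ := by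
        gcongr with σ hσ
        exact sum_hits_le_topSum hf (mem_filter.1 hσ).2
    _ ≤ 2 * ∑ σ : Perm α, topSum (fun i => f (i, σ i)) ℓ := by
        gcongr 2 * ?_
        exact sum_le_sum_of_subset_of_nonneg (subset_univ G)
          fun σ _ _ => topSum_nonneg _ (fun i => hf _) ℓ

theorem factorial_mul_topSum_le_sum_topSum (hf : ∀ q, 0 ≤ f q) {ℓ : ℕ} (hℓ : 0 < ℓ)
    (hℓn : ℓ ≤ Fintype.card α) :
    (Fintype.card α - 1)! * topSum f (ℓ * Fintype.card α)
      ≤ 200 * ∑ σ : Perm α, topSum (fun i => f (i, σ i)) ℓ := by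
  set n := Fintype.card α
  set m := ℓ * n
  -- `k = ⌈m / 100⌉`
  set k := (m + 99) / 100
  obtain ⟨T, hTk, hT⟩ := exists_sum_eq_topSum f k
  have hTcard : 2 * (#T - 1) ≤ ℓ * (n - 1) := by
    have h1 : ℓ * (n - 1) = m - ℓ := Nat.mul_sub_one ℓ n
    rcases Nat.lt_or_ge n 2 with hn | hn
    · have : m = ℓ := by simp only [m, show n = 1 by omega, mul_one]
      omega
    · have : ℓ * 2 ≤ m := Nat.mul_le_mul_left ℓ hn
      omega
  have hk : topSum f m ≤ 100 * topSum f k := by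
    have hkpos : 0 < k := by have := Nat.mul_pos hℓ (hℓ.trans_le hℓn); omega
    have hmk : (m : ℝ) ≤ 100 * k := by exact_mod_cast (show m ≤ 100 * k by omega)
    refine le_of_mul_le_mul_left ?_ (show (0 : ℝ) < k by exact_mod_cast hkpos)
    calc (k : ℝ) * topSum f m ≤ m * topSum f k := mul_topSum_le_mul_topSum f hf (by omega)
      _ ≤ 100 * k * topSum f k := by gcongr; exact topSum_nonneg f hf k
      _ = k * (100 * topSum f k) := by ring
  calc ((n - 1)! : ℝ) * topSum f m ≤ (n - 1)! * (100 * ∑ q ∈ T, f q) := by rw [hT]; gcongr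
    _ = 100 * ((n - 1)! * ∑ q ∈ T, f q) := by ring
    _ ≤ 100 * (2 * ∑ σ : Perm α, topSum (fun i => f (i, σ i)) ℓ) :=
        mul_le_mul_of_nonneg_left (factorial_mul_sum_le_two_mul_sum_topSum hf hℓ hTcard)
          (by norm_num)
    _ = _ := by ring

end Bounds

theorem sum_range_kmax_eq_topSum {n : ℕ} (x : Fin n → ℝ) (ℓ : ℕ) :
    ∑ k ∈ range ℓ, kmax x (k + 1) = topSum x ℓ := by
  have hperm : (List.ofFn x).Perm (univ.toList.map x) := by
    rw [List.ofFn_eq_map]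
    exact ((List.perm_ext_iff_of_nodup (List.nodup_finRange n) (nodup_toList _)).2
      fun i => by simp).map x
  refine sum_congr rfl fun k _ => ?_
  simp only [kmax, Nat.add_sub_cancel]
  exact congrArg (List.getD · k 0) (sortDesc_eq_of_perm hperm)

theorem sum_range_smat_eq_topSum {n N : ℕ} (a : Fin n → Fin N → ℝ) (m : ℕ) :
    ∑ j ∈ range m, smat a (j + 1) = topSum (fun q : Fin n × Fin N => |a q.1 q.2|) m :=
  sum_congr rfl fun j _ => by simp only [smat, Nat.add_sub_cancel]; rfl

/-- Example 1: the main theorem for `G = 𝔖_n`, the symmetric group. -/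
theorem stmt6 (n ℓ : ℕ) (hℓ : ℓ ≤ n) (a : Fin n → Fin n → ℝ) :
    (1 / 800) * ((1 / n) * ∑ j ∈ Finset.range (ℓ * n), smat a (j + 1))
      ≤ (∑ π : Equiv.Perm (Fin n),
          ∑ k ∈ Finset.range ℓ, kmax (fun i => |a i (π i)|) (k + 1)) / (n.factorial : ℝ) ∧
    (∑ π : Equiv.Perm (Fin n),
          ∑ k ∈ Finset.range ℓ, kmax (fun i => |a i (π i)|) (k + 1)) / (n.factorial : ℝ)
      ≤ 2 * ((1 / n) * ∑ j ∈ Finset.range (ℓ * n), smat a (j + 1)) := by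
  rcases Nat.eq_zero_or_pos ℓ with rfl | hℓ0
  · simp
  have : Nonempty (Fin n) := ⟨⟨0, by omega⟩⟩
  simp only [sum_range_kmax_eq_topSum, sum_range_smat_eq_topSum]
  set f : Fin n × Fin n → ℝ := fun q => |a q.1 q.2|
  have hf : ∀ q, 0 ≤ f q := fun q => abs_nonneg _
  set S := ∑ π : Equiv.Perm (Fin n), topSum (fun i => |a i (π i)|) ℓ
  set W := topSum f (ℓ * n)
  have hupper : S ≤ (n - 1)! * W := by
    simpa using sum_topSum_le_factorial_mul_topSum hf ℓ
  have hlower : (n - 1)! * W ≤ 200 * S := by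
    simpa using factorial_mul_topSum_le_sum_topSum hf hℓ0 (by simpa using hℓ)
  have hW : 0 ≤ W := topSum_nonneg f hf _
  have hn : (0 : ℝ) < n := by exact_mod_cast (by omega : 0 < n)
  have hfact : (n ! : ℝ) = n * (n - 1)! := by
    rw [← Nat.mul_factorial_pred (by omega : n ≠ 0)]; push_cast; ring
  rw [hfact]
  constructor
  · rw [le_div_iff₀ (by positivity)]
    calc 1 / 800 * (1 / n * W) * (n * (n - 1)!) = (n - 1)! * W / 800 := by field_simp
      _ ≤ S := by linarith
  · rw [div_le_iff₀ (by positivity)]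
    calc S ≤ (n - 1)! * W := hupper
      _ ≤ 2 * ((n - 1)! * W) := by linarith [mul_nonneg (Nat.cast_nonneg (n - 1)! : (0 : ℝ) ≤ _) hW]
      _ = 2 * (1 / n * W) * (n * (n - 1)!) := by field_simp
end

section
/- Let $b \in \{0,1\}^{n\times N}$ be a matrix with exactly $\ell N$ entries equal to $1$, and let $G$ satisfy $\Pro(g(i)=j)=1/N$ and $\Pro(g(i_1)=j_1,g(i_2)=j_2)\le C_G/N^2$ for distinct pairs, $C_G\ge 1$. Then for all integers $k$ with $1 \le k \le \ell/2$, $\E\, \kmax_{1\le i\le n} b_{ig(i)} \ge \frac{1}{2+4C_G}$. -/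
open Finset

section KthLargest

variable {n : ℕ} {x : Fin n → ℝ}

lemma List.countP_ofFn {α : Type*} (p : α → Prop) [DecidablePred p] (x : Fin n → α) :
    (List.ofFn x).countP (fun y => decide (p y)) = #{i | p (x i)} := by
  rw [List.ofFn_eq_map, List.countP_map]
  simp only [Fin.univ_def, Finset.filter, Multiset.filter_coe, List.countP_eq_length_filter,
    Function.comp_def]
  rfl

lemma kmax_nonneg (hx : ∀ i, 0 ≤ x i) (k : ℕ) : 0 ≤ kmax x k := by
  unfold kmax
  rw [List.getD_eq_getElem?_getD]
  cases h : ((List.ofFn x).mergeSort _)[k - 1]? with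
  | none => simp
  | some a =>
    have ha := (List.mergeSort_perm _ _).mem_iff.mp (List.mem_of_getElem? h)
    obtain ⟨i, rfl⟩ := List.mem_ofFn.mp ha
    exact hx i

lemma List.le_getD_of_le_countP {α : Type*} [LinearOrder α] {l : List α}
    (hl : l.Pairwise (· ≥ ·)) {a : α} {k : ℕ} (hk : 1 ≤ k)
    (h : k ≤ l.countP (fun y => decide (a ≤ y))) (d : α) : a ≤ l.getD (k - 1) d := by
  have hlen : k - 1 < l.length := by
    have := l.countP_le_length (p := fun y => decide (a ≤ y))
    omega
  rw [List.getD_eq_getElem _ _ hlen]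
  by_contra! hlt
  have hdrop : (l.drop (k - 1)).countP (fun y => decide (a ≤ y)) = 0 := by
    rw [List.countP_eq_zero]
    intro y hy
    obtain ⟨j, hj, rfl⟩ := List.getElem_of_mem hy
    simp only [List.getElem_drop, decide_eq_true_eq, not_le]
    refine lt_of_le_of_lt ?_ hlt
    rcases j.eq_zero_or_pos with rfl | hj0
    · rfl
    · exact List.pairwise_iff_getElem.mp hl _ _ hlen _ (by omega)
  have htake : (l.take (k - 1)).countP (fun y => decide (a ≤ y)) ≤ k - 1 :=
    List.countP_le_length.trans (List.length_take_le _ _)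
  have := List.countP_append (l₁ := l.take (k - 1)) (l₂ := l.drop (k - 1))
    (p := fun y => decide (a ≤ y))
  rw [List.take_append_drop] at this
  omega

lemma le_kmax {a : ℝ} {k : ℕ} (hk : 1 ≤ k) (h : k ≤ #{i | a ≤ x i}) : a ≤ kmax x k := by
  have hsorted : ((List.ofFn x).mergeSort (fun a b => decide (b ≤ a))).Pairwise (· ≥ ·) := by
    simpa using List.pairwise_mergeSort (le := fun a b => decide (b ≤ a))
      (by simpa using fun a b c hab hbc => hbc.trans hab) (by simpa using fun a b => le_total b a)
      (List.ofFn x)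
  refine List.le_getD_of_le_countP hsorted hk ?_ 0
  rwa [(List.mergeSort_perm _ _).countP_eq, List.countP_ofFn]

lemma one_le_kmax {k : ℕ} (hk : 1 ≤ k) (h : k ≤ #{i | x i = 1}) : 1 ≤ kmax x k :=
  le_kmax hk (h.trans (card_le_card (monotone_filter_right univ fun _ _ h => h.ge)))

end KthLargest

section SecondMoment

variable {α : Type*}

lemma sq_sum_sub_le_sum_sq_mul_card_filter (s : Finset α) (f : α → ℝ) {t : ℝ} (ht : 0 ≤ t)
    (h : t * #s ≤ ∑ i ∈ s, f i) :
    (∑ i ∈ s, f i - t * #s) ^ 2 ≤ (∑ i ∈ s, f i ^ 2) * #{i ∈ s | t ≤ f i} := by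
  have hsmall : ∑ i ∈ s with ¬t ≤ f i, f i ≤ t * #s :=
    calc ∑ i ∈ s with ¬t ≤ f i, f i ≤ ∑ i ∈ s with ¬t ≤ f i, t :=
          sum_le_sum fun i hi => le_of_not_ge (mem_filter.mp hi).2
      _ = t * #{i ∈ s | ¬t ≤ f i} := by rw [sum_const, nsmul_eq_mul, mul_comm]
      _ ≤ t * #s := by gcongr; exact filter_subset (fun i => ¬t ≤ f i) s
  have hlarge : ∑ i ∈ s, f i - t * #s ≤ ∑ i ∈ s with t ≤ f i, f i := by
    rw [← sum_filter_add_sum_filter_not s (fun i => t ≤ f i)]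
    linarith
  calc (∑ i ∈ s, f i - t * #s) ^ 2 ≤ (∑ i ∈ s with t ≤ f i, f i) ^ 2 :=
        pow_le_pow_left₀ (sub_nonneg.mpr h) hlarge 2
    _ ≤ #{i ∈ s | t ≤ f i} * ∑ i ∈ s with t ≤ f i, f i ^ 2 := sq_sum_le_card_mul_sum_sq
    _ ≤ (∑ i ∈ s, f i ^ 2) * #{i ∈ s | t ≤ f i} := by
        rw [mul_comm]
        gcongr
        exact filter_subset _ s

lemma sum_sum_le_of_diag_le_of_offDiag_le (s : Finset α) (F : α → α → ℝ) {a c : ℝ}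
    (hc : 0 ≤ c) (hdiag : ∀ p ∈ s, F p p ≤ a) (hoff : ∀ p ∈ s, ∀ q ∈ s, p ≠ q → F p q ≤ c) :
    ∑ p ∈ s, ∑ q ∈ s, F p q ≤ #s * (a + #s * c) := by
  classical
  calc ∑ p ∈ s, ∑ q ∈ s, F p q ≤ ∑ _p ∈ s, (a + #s * c) := sum_le_sum fun p hp => ?_
    _ = #s * (a + #s * c) := by rw [sum_const, nsmul_eq_mul]
  rw [← add_sum_erase _ _ hp]
  gcongr
  · exact hdiag p hp
  · calc ∑ q ∈ s.erase p, F p q ≤ ∑ _q ∈ s.erase p, c :=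
          sum_le_sum fun q hq => hoff p hp q (mem_of_mem_erase hq) (ne_of_mem_erase hq).symm
      _ ≤ #s * c := by
          rw [sum_const, nsmul_eq_mul]
          gcongr
          exact erase_subset p s

lemma card_filter_le_sum (s : Finset α) (P : α → Prop) [DecidablePred P] {φ : α → ℝ}
    (h0 : ∀ a ∈ s, 0 ≤ φ a) (h1 : ∀ a ∈ s, P a → 1 ≤ φ a) :
    (#{a ∈ s | P a} : ℝ) ≤ ∑ a ∈ s, φ a := by
  rw [← sum_boole]
  refine sum_le_sum fun a ha => ?_
  split_ifs with hP
  exacts [h1 a ha hP, h0 a ha]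

lemma add_mul_sq_le_mul_sq_sub {ℓ k C : ℝ} (hℓ : 2 ≤ ℓ) (hk : 2 * k ≤ ℓ) (hC : 0 ≤ C) :
    ℓ + C * ℓ ^ 2 ≤ (2 + 4 * C) * (ℓ - k) ^ 2 := by
  have : ℓ ^ 2 ≤ 4 * (ℓ - k) ^ 2 := by nlinarith
  nlinarith

lemma one_div_le_card_filter_div_card_of_moments (s : Finset α) (f : α → ℝ) {ℓ k C : ℝ}
    (hℓ : 2 ≤ ℓ) (hk0 : 0 ≤ k) (hk : 2 * k ≤ ℓ) (hC : 0 ≤ C)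
    (hmean : (∑ i ∈ s, f i) / #s = ℓ) (hsecond : (∑ i ∈ s, f i ^ 2) / #s ≤ ℓ + C * ℓ ^ 2) :
    1 / (2 + 4 * C) ≤ #{i ∈ s | k ≤ f i} / #s := by
  have hs : (0 : ℝ) < #s := by
    refine (Nat.cast_nonneg _).lt_of_ne fun hs => ?_
    rw [← hs, div_zero] at hmean
    linarith
  rw [div_eq_iff hs.ne'] at hmean
  rw [div_le_iff₀ hs] at hsecond
  have hkℓ : 0 < ℓ - k := by linarith
  have hPZ := sq_sum_sub_le_sum_sq_mul_card_filter s f hk0 (by rw [hmean]; gcongr; linarith)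
  rw [div_le_div_iff₀ (by positivity) hs, one_mul]
  refine le_of_mul_le_mul_left ?_ (mul_pos (pow_pos hkℓ 2) hs)
  calc (ℓ - k) ^ 2 * #s * #s = (∑ i ∈ s, f i - k * #s) ^ 2 := by rw [hmean]; ring
    _ ≤ (ℓ + C * ℓ ^ 2) * #s * #{i ∈ s | k ≤ f i} := hPZ.trans (by gcongr)
    _ ≤ (2 + 4 * C) * (ℓ - k) ^ 2 * #s * #{i ∈ s | k ≤ f i} := by
        gcongr
        exact add_mul_sq_le_mul_sq_sub hℓ hk hC
    _ = (ℓ - k) ^ 2 * #s * (#{i ∈ s | k ≤ f i} * (2 + 4 * C)) := by ring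

end SecondMoment

section HitCount

variable {ι κ : Type*} [DecidableEq κ]

def hitCount (S : Finset (ι × κ)) (g : ι → κ) : ℕ := #{p ∈ S | g p.1 = p.2}

lemma sum_hitCount (G : Finset (ι → κ)) (S : Finset (ι × κ)) :
    ∑ g ∈ G, hitCount S g = ∑ p ∈ S, #{g ∈ G | g p.1 = p.2} :=
  sum_card_bipartiteAbove_eq_sum_card_bipartiteBelow (s := G) (t := S)
    (fun (g : ι → κ) (p : ι × κ) => g p.1 = p.2)

lemma sum_hitCount_sq (G : Finset (ι → κ)) (S : Finset (ι × κ)) :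
    ∑ g ∈ G, hitCount S g ^ 2 = ∑ p ∈ S, ∑ q ∈ S, #{g ∈ G | g p.1 = p.2 ∧ g q.1 = q.2} := by
  have hsq : ∀ g, hitCount S g ^ 2 = #{pq ∈ S ×ˢ S | g pq.1.1 = pq.1.2 ∧ g pq.2.1 = pq.2.2} := by
    intro g
    rw [hitCount, sq, ← card_product, ← filter_product]
  simp_rw [hsq]
  rw [← sum_product' (f := fun (p q : ι × κ) => #{g ∈ G | g p.1 = p.2 ∧ g q.1 = q.2})]
  exact sum_card_bipartiteAbove_eq_sum_card_bipartiteBelow (s := G) (t := S ×ˢ S)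
    (fun (g : ι → κ) (pq : (ι × κ) × ι × κ) => g pq.1.1 = pq.1.2 ∧ g pq.2.1 = pq.2.2)

lemma sum_hitCount_div_card (G : Finset (ι → κ)) (S : Finset (ι × κ)) {m : ℝ}
    (h1 : ∀ p ∈ S, (#{g ∈ G | g p.1 = p.2} : ℝ) / #G = m) :
    (∑ g ∈ G, (hitCount S g : ℝ)) / #G = #S * m := by
  rw [← Nat.cast_sum, sum_hitCount, Nat.cast_sum, sum_div, sum_congr rfl h1, sum_const,
    nsmul_eq_mul]

lemma sum_hitCount_sq_div_card_le (G : Finset (ι → κ)) (S : Finset (ι × κ)) {m c : ℝ}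
    (hc : 0 ≤ c) (h1 : ∀ p ∈ S, (#{g ∈ G | g p.1 = p.2} : ℝ) / #G = m)
    (h2 : ∀ p ∈ S, ∀ q ∈ S, p ≠ q → (#{g ∈ G | g p.1 = p.2 ∧ g q.1 = q.2} : ℝ) / #G ≤ c) :
    (∑ g ∈ G, (hitCount S g : ℝ) ^ 2) / #G ≤ #S * (m + #S * c) := by
  have hsq : ∑ g ∈ G, (hitCount S g : ℝ) ^ 2 =
      ∑ p ∈ S, ∑ q ∈ S, (#{g ∈ G | g p.1 = p.2 ∧ g q.1 = q.2} : ℝ) := by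
    exact_mod_cast sum_hitCount_sq G S
  rw [hsq, sum_div]
  simp_rw [sum_div]
  exact sum_sum_le_of_diag_le_of_offDiag_le S _ hc (fun p hp => by simpa using (h1 p hp).le) h2

lemma hitCount_filter_univ [Fintype ι] [Fintype κ] (P : ι × κ → Prop) [DecidablePred P]
    (g : ι → κ) : hitCount {p | P p} g = #{i | P (i, g i)} :=
  card_bij' (fun p _ => p.1) (fun i _ => (i, g i)) (by simp +contextual)
    (by simp +contextual) (by simp +contextual) (by simp)

end HitCount

/-- Lemma 3.6: for a 0-1 matrix `b` with exactly `ℓN` ones,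
`E kmax b_{i g(i)} ≥ 1/(2+4C_G)` for every `1 ≤ k ≤ ℓ/2`. -/
theorem stmt14 (n N ℓ : ℕ) (hℓ : ℓ ≤ n)
    (b : Fin n → Fin N → ℝ)
    (hb01 : ∀ i j, b i j = 0 ∨ b i j = 1)
    (hones : ((Finset.univ : Finset (Fin n × Fin N)).filter
      fun p => b p.1 p.2 = 1).card = ℓ * N)
    (G : Finset (Fin n → Fin N)) (hG : G.Nonempty)
    (C : ℝ) (hC : 1 ≤ C)
    (h1 : ∀ i : Fin n, ∀ j : Fin N,
      ((G.filter fun g => g i = j).card : ℝ) / G.card = 1 / N)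
    (h2 : ∀ p q : Fin n × Fin N, p ≠ q →
      ((G.filter fun g => g p.1 = p.2 ∧ g q.1 = q.2).card : ℝ) / G.card
        ≤ C / (N : ℝ) ^ 2)
    (k : ℕ) (hk1 : 1 ≤ k) (hk2 : 2 * k ≤ ℓ) :
    (∑ g ∈ G, kmax (fun i => b i (g i)) k) / G.card ≥ 1 / (2 + 4 * C) := by
  set ones : Finset (Fin n × Fin N) := {p | b p.1 p.2 = 1}
  set X : (Fin n → Fin N) → ℝ := fun g => hitCount ones g
  obtain ⟨g₀, -⟩ := hG
  have hN : (0 : ℝ) < N := by exact_mod_cast Fin.pos (g₀ ⟨0, by omega⟩)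
  have hmean : (∑ g ∈ G, X g) / #G = ℓ := by
    rw [sum_hitCount_div_card G ones fun p _ => h1 p.1 p.2, hones]
    push_cast
    field_simp
  have hsecond : (∑ g ∈ G, X g ^ 2) / #G ≤ ℓ + C * ℓ ^ 2 := by
    refine (sum_hitCount_sq_div_card_le G ones (by positivity) (fun p _ => h1 p.1 p.2)
      fun p _ q _ => h2 p q).trans_eq ?_
    rw [hones]
    push_cast
    field_simp
  have hkmax : (#{g ∈ G | (k : ℝ) ≤ X g} : ℝ) ≤ ∑ g ∈ G, kmax (fun i => b i (g i)) k := by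
    refine card_filter_le_sum G _ (fun g _ => kmax_nonneg (fun i => ?_) k)
      fun g _ hg => one_le_kmax hk1 ?_
    · rcases hb01 i (g i) with h | h <;> simp [h]
    · rw [← hitCount_filter_univ (fun p => b p.1 p.2 = 1) g]
      exact Nat.cast_le.mp hg
  calc 1 / (2 + 4 * C) ≤ #{g ∈ G | (k : ℝ) ≤ X g} / #G :=
        one_div_le_card_filter_div_card_of_moments G X (by exact_mod_cast (by omega : 2 ≤ ℓ))
          (by positivity) (by exact_mod_cast hk2) (by linarith) hmean hsecond
    _ ≤ (∑ g ∈ G, kmax (fun i => b i (g i)) k) / #G := by gcongr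
end
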